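/- With notation as in the splice-quotient-type reduction: for l ∈ V_Z^𝒩 and any lift l' ∈ V_Z with l'|_𝒩 = l, the element ψ(l) = l' - Σ_{e ∈ ℰ} ⌊(-l',E_e)/α_e⌋ D_e is independent of the choice of l'. Moreover the fiber 𝒮_Z(l) of the Lipman cone over l consists exactly of the elements ψ(l) + Σ_e k_e D_e with k_e ∈ ℕ satisfying Σ_{e ∈ ℰ_n} k_e ≤ (-ψ(l), E_n) for all nodes n. -/
import Mathlib


set_option linter.unusedSectionVars false
set_option linter.unusedVariables false
set_option linter.unusedTactic false
set_option linter.unnecessarySimpa false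
set_option maxHeartbeats 1000000

/-- The degree (valency) of a vertex in the graph with intersection matrix `I`. -/
def degG {V : Type*} [Fintype V] [DecidableEq V] (I : Matrix V V ℤ) (v : V) : ℕ :=
  (Finset.univ.filter fun w => w ≠ v ∧ I v w ≠ 0).card

/-- The intersection pairing `(x, E_v) = ∑_u I v u · x u`. -/
def pairQ {V : Type*} [Fintype V] (I : Matrix V V ℤ) (x : V → ℚ) (v : V) : ℚ :=
  ∑ u, (I v u : ℚ) * x u

/-- `x ∈ V_Z = ℤ⟨E_v^* : v node or end⟩ ∩ L`: `x` is an integral cycle which is an integral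
combination of the dual cycles `E_v^*` of the nodes and ends. -/
def VZmem {V : Type*} [Fintype V] [DecidableEq V] (I : Matrix V V ℤ)
    (Estar : V → V → ℚ) (x : V → ℚ) : Prop :=
  (∀ v, ∃ m : ℤ, x v = (m : ℚ)) ∧
  ∃ cf : V → ℤ, x = fun v =>
    ∑ u ∈ Finset.univ.filter (fun u => 3 ≤ degG I u ∨ degG I u = 1),
      (cf u : ℚ) * Estar u v

namespace Stmt18Aux

/-- the continuant sequence of a leg -/
def legz (a : ℕ → ℤ) : ℕ → ℤ
  | 0 => 0
  | 1 => 1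
  | (j+2) => a (j+1) * legz a (j+1) - legz a j

theorem nat_two_step {C : ℕ → Prop} (h0 : C 0) (h1 : C 1)
    (hstep : ∀ m, C m → C (m+1) → C (m+2)) : ∀ n, C n := by
  have key : ∀ n, C n ∧ C (n+1) := by
    intro n
    induction n with
    | zero => exact ⟨h0, h1⟩
    | succ m ih => exact ⟨ih.2, hstep m ih.1 ih.2⟩
  exact fun n => (key n).1

variable {V : Type*} [Fintype V] [DecidableEq V] (I : Matrix V V ℤ)

theorem pairQ_sub (x y : V → ℚ) (v : V) :
    pairQ I (fun w => x w - y w) v = pairQ I x v - pairQ I y v := by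
  simp [pairQ, mul_sub, Finset.sum_sub_distrib]

theorem pairQ_eq_of
    (hnegdef : ∀ x : V → ℚ, x ≠ 0 → ∑ v, ∑ w, x v * (I v w : ℚ) * x w < 0)
    (x y : V → ℚ) (h : ∀ v, pairQ I x v = pairQ I y v) : x = y := by
  by_contra hxy
  have hd : (fun v => x v - y v) ≠ 0 := by
    intro h0
    apply hxy
    funext v
    have := congrFun h0 v
    simpa [sub_eq_zero] using this
  have hQ := hnegdef _ hd
  have hz : ∑ v, ∑ w, (x v - y v) * (I v w : ℚ) * (x w - y w) = 0 := by
    have : ∀ v, ∑ w, (x v - y v) * (I v w : ℚ) * (x w - y w)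
        = (x v - y v) * pairQ I (fun w => x w - y w) v := by
      intro v
      rw [pairQ, Finset.mul_sum]
      exact Finset.sum_congr rfl fun w _ => by ring
    rw [Finset.sum_congr rfl fun v _ => this v]
    apply Finset.sum_eq_zero
    intro v _
    rw [pairQ_sub, h v, sub_self, mul_zero]
  rw [hz] at hQ
  exact absurd hQ (lt_irrefl 0)

theorem pairQ_add (x y : V → ℚ) (v : V) :
    pairQ I (fun w => x w + y w) v = pairQ I x v + pairQ I y v := by
  simp [pairQ, mul_add, Finset.sum_add_distrib]

theorem pairQ_eq_of_mixed
    (hnegdef : ∀ x : V → ℚ, x ≠ 0 → ∑ v, ∑ w, x v * (I v w : ℚ) * x w < 0)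
    (x y : V → ℚ) (S : Set V)
    (hval : ∀ v ∈ S, x v = y v)
    (hpair : ∀ v, v ∉ S → pairQ I x v = pairQ I y v) : x = y := by
  by_contra hxy
  have hd : (fun v => x v - y v) ≠ 0 := by
    intro h0
    apply hxy
    funext v
    have := congrFun h0 v
    simpa [sub_eq_zero] using this
  have hQ := hnegdef _ hd
  have hz : ∑ v, ∑ w, (x v - y v) * (I v w : ℚ) * (x w - y w) = 0 := by
    have : ∀ v, ∑ w, (x v - y v) * (I v w : ℚ) * (x w - y w)
        = (x v - y v) * pairQ I (fun w => x w - y w) v := by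
      intro v
      rw [pairQ, Finset.mul_sum]
      exact Finset.sum_congr rfl fun w _ => by ring
    rw [Finset.sum_congr rfl fun v _ => this v]
    apply Finset.sum_eq_zero
    intro v _
    by_cases hv : v ∈ S
    · rw [hval v hv, sub_self, zero_mul]
    · rw [pairQ_sub, hpair v hv, sub_self, mul_zero]
  rw [hz] at hQ
  exact absurd hQ (lt_irrefl 0)

theorem pairQ_sum_ite (F : Finset ℕ) (P : ℕ → V) (c : ℕ → ℚ) (v : V) :
    pairQ I (fun w => ∑ j ∈ F, if P j = w then c j else 0) v
      = ∑ j ∈ F, (I v (P j) : ℚ) * c j := by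
  unfold pairQ
  simp only [Finset.mul_sum]
  rw [Finset.sum_comm]
  refine Finset.sum_congr rfl fun j _ => ?_
  simp [mul_ite]

theorem sum_suppSum_mul (F : Finset ℕ) (P : ℕ → V) (c : ℕ → ℚ) (g : V → ℚ) :
    ∑ v, (∑ j ∈ F, if P j = v then c j else 0) * g v = ∑ j ∈ F, c j * g (P j) := by
  simp only [Finset.sum_mul]
  rw [Finset.sum_comm]
  refine Finset.sum_congr rfl fun j _ => ?_
  simp [ite_mul]

theorem pairQ_dualcomb (Estar : V → V → ℚ)
    (hEstar : ∀ v w, ∑ u, (I w u : ℚ) * Estar v u = if v = w then -1 else 0)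
    (S : Finset V) (cf : V → ℤ) (v : V) :
    pairQ I (fun w => ∑ u ∈ S, (cf u : ℚ) * Estar u w) v
      = -(if v ∈ S then (cf v : ℚ) else 0) := by
  unfold pairQ
  simp only [Finset.mul_sum]
  rw [Finset.sum_comm]
  have : ∀ u ∈ S, ∑ w, (I v w : ℚ) * ((cf u : ℚ) * Estar u w)
      = (cf u : ℚ) * (if u = v then -1 else 0) := by
    intro u _
    rw [← hEstar u v, Finset.mul_sum]
    exact Finset.sum_congr rfl fun w _ => by ring
  rw [Finset.sum_congr rfl this]
  simp only [mul_ite, mul_neg, mul_one, mul_zero]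
  rw [Finset.sum_ite_eq' S v (fun u => -(cf u : ℚ))]
  split <;> simp

theorem pairQ_finsum {ι : Type*} (F : Finset ι) (f : ι → V → ℚ) (v : V) :
    pairQ I (fun w => ∑ i ∈ F, f i w) v = ∑ i ∈ F, pairQ I (f i) v := by
  unfold pairQ
  simp only [Finset.mul_sum]
  rw [Finset.sum_comm]

theorem pairQ_smul (a : ℚ) (x : V → ℚ) (v : V) :
    pairQ I (fun w => a * x w) v = a * pairQ I x v := by
  unfold pairQ
  rw [Finset.mul_sum]
  exact Finset.sum_congr rfl fun w _ => by ring

theorem Qform (x : V → ℚ) :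
    ∑ v, ∑ w, x v * (I v w : ℚ) * x w = ∑ v, x v * pairQ I x v := by
  refine Finset.sum_congr rfl fun v _ => ?_
  rw [pairQ, Finset.mul_sum]
  exact Finset.sum_congr rfl fun w _ => by ring

theorem sum_eq_three {f : V → ℚ} {a b c : V} (hab : a ≠ b) (hac : a ≠ c) (hbc : b ≠ c)
    (h : ∀ u, u ≠ a → u ≠ b → u ≠ c → f u = 0) :
    ∑ u, f u = f a + f b + f c := by
  have hsub : ({a, b, c} : Finset V) ⊆ Finset.univ := Finset.subset_univ _
  rw [← Finset.sum_subset hsub (fun u _ hu => by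
    simp only [Finset.mem_insert, Finset.mem_singleton] at hu
    push_neg at hu
    exact h u hu.1 hu.2.1 hu.2.2)]
  rw [Finset.sum_insert (by simp [hab, hac]), Finset.sum_insert (by simp [hbc]),
    Finset.sum_singleton, add_assoc]

theorem sum_eq_two {f : V → ℚ} {a b : V} (hab : a ≠ b)
    (h : ∀ u, u ≠ a → u ≠ b → f u = 0) :
    ∑ u, f u = f a + f b := by
  have hsub : ({a, b} : Finset V) ⊆ Finset.univ := Finset.subset_univ _
  rw [← Finset.sum_subset hsub (fun u _ hu => by
    simp only [Finset.mem_insert, Finset.mem_singleton] at hu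
    push_neg at hu
    exact h u hu.1 hu.2)]
  rw [Finset.sum_insert (by simp [hab]), Finset.sum_singleton]

theorem sum_Icc_two {f : ℕ → ℚ} {k i : ℕ} (h2 : i + 1 ≤ k) (hf0 : f 0 = 0)
    (hz : ∀ j, 1 ≤ j → j ≤ k → j ≠ i → j ≠ i + 1 → f j = 0) :
    ∑ j ∈ Finset.Icc 1 k, f j = f i + f (i+1) := by
  rcases Nat.eq_zero_or_pos i with hi | hi
  · subst hi
    rw [hf0, zero_add]
    refine Finset.sum_eq_single_of_mem 1 (by simp only [Finset.mem_Icc]; omega) ?_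
    intro j hj hj1
    rw [Finset.mem_Icc] at hj
    exact hz j hj.1 hj.2 (by omega) (by omega)
  · have hsub : ({i, i+1} : Finset ℕ) ⊆ Finset.Icc 1 k := by
      intro u hu
      simp only [Finset.mem_insert, Finset.mem_singleton] at hu
      rcases hu with h | h <;> (subst h; simp only [Finset.mem_Icc]; omega)
    rw [← Finset.sum_subset hsub (fun u hu hu' => by
      simp only [Finset.mem_Icc] at hu
      simp only [Finset.mem_insert, Finset.mem_singleton] at hu'
      push_neg at hu'
      exact hz u hu.1 hu.2 hu'.1 hu'.2)]
    rw [Finset.sum_insert (by simp), Finset.sum_singleton]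

theorem sum_Icc_three {f : ℕ → ℚ} {k i : ℕ} (h1 : 1 ≤ i) (h2 : i + 1 ≤ k) (hf0 : f 0 = 0)
    (hz : ∀ j, 1 ≤ j → j ≤ k → j ≠ i - 1 → j ≠ i → j ≠ i + 1 → f j = 0) :
    ∑ j ∈ Finset.Icc 1 k, f j = f (i-1) + f i + f (i+1) := by
  rcases Nat.eq_or_lt_of_le h1 with hi | hi
  · -- i = 1
    have : i = 1 := hi.symm
    subst this
    simp only [Nat.sub_self, hf0, zero_add]
    exact sum_Icc_two h2 hf0 (fun j hj hj' hji hji1 => hz j hj hj' (by omega) hji hji1)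
  · -- 2 ≤ i
    have hsub : ({i-1, i, i+1} : Finset ℕ) ⊆ Finset.Icc 1 k := by
      intro u hu
      simp only [Finset.mem_insert, Finset.mem_singleton] at hu
      rcases hu with h | h | h <;> (subst h; simp only [Finset.mem_Icc]; omega)
    rw [← Finset.sum_subset hsub (fun u hu hu' => by
      simp only [Finset.mem_Icc] at hu
      simp only [Finset.mem_insert, Finset.mem_singleton] at hu'
      push_neg at hu'
      exact hz u hu.1 hu.2 hu'.1 hu'.2.1 hu'.2.2)]
    rw [Finset.sum_insert (by simp only [Finset.mem_insert, Finset.mem_singleton]; omega),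
      Finset.sum_insert (by simp only [Finset.mem_singleton]; omega),
      Finset.sum_singleton, add_assoc]

theorem neigh2 {v a b : V} (hdeg : degG I v = 2) (hab : a ≠ b) (ha : a ≠ v) (hb : b ≠ v)
    (hIa : I v a ≠ 0) (hIb : I v b ≠ 0) :
    ∀ w, w ≠ v → I v w ≠ 0 → w = a ∨ w = b := by
  intro w hw hIw
  have hsub : ({a, b} : Finset V) ⊆ Finset.univ.filter (fun w => w ≠ v ∧ I v w ≠ 0) := by
    intro u hu
    rcases Finset.mem_insert.mp hu with h | h
    · subst h; simp [ha, hIa]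
    · rw [Finset.mem_singleton] at h; subst h; simp [hb, hIb]
  have hcard : ({a, b} : Finset V).card = 2 := Finset.card_pair hab
  have heq : ({a, b} : Finset V) = Finset.univ.filter (fun w => w ≠ v ∧ I v w ≠ 0) :=
    Finset.eq_of_subset_of_card_le hsub (by rw [hcard]; exact le_of_eq hdeg)
  have hwmem : w ∈ ({a, b} : Finset V) := by
    rw [heq]; simp [hw, hIw]
  simpa using hwmem

theorem neigh1 {v a : V} (hdeg : degG I v = 1) (ha : a ≠ v) (hIa : I v a ≠ 0) :
    ∀ w, w ≠ v → I v w ≠ 0 → w = a := by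
  intro w hw hIw
  have hsub : ({a} : Finset V) ⊆ Finset.univ.filter (fun w => w ≠ v ∧ I v w ≠ 0) := by
    intro u hu
    rw [Finset.mem_singleton] at hu; subst hu; simp [ha, hIa]
  have heq : ({a} : Finset V) = Finset.univ.filter (fun w => w ≠ v ∧ I v w ≠ 0) :=
    Finset.eq_of_subset_of_card_le hsub
      (by rw [Finset.card_singleton]; exact le_of_eq hdeg)
  have hwmem : w ∈ ({a} : Finset V) := by rw [heq]; simp [hw, hIw]
  simpa using hwmem

theorem VZmem_sub (Estar : V → V → ℚ) (x y : V → ℚ)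
    (hx : VZmem I Estar x) (hy : VZmem I Estar y) :
    VZmem I Estar (fun v => x v - y v) := by
  obtain ⟨hxi, cfx, hcfx⟩ := hx
  obtain ⟨hyi, cfy, hcfy⟩ := hy
  constructor
  · intro v
    obtain ⟨mx, hmx⟩ := hxi v
    obtain ⟨my, hmy⟩ := hyi v
    exact ⟨mx - my, by show x v - y v = _; rw [hmx, hmy]; push_cast; ring⟩
  · refine ⟨fun u => cfx u - cfy u, ?_⟩
    funext v
    rw [hcfx, hcfy]
    rw [← Finset.sum_sub_distrib]
    refine Finset.sum_congr rfl fun u _ => by push_cast; ring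

theorem VZmem_add (Estar : V → V → ℚ) (x y : V → ℚ)
    (hx : VZmem I Estar x) (hy : VZmem I Estar y) :
    VZmem I Estar (fun v => x v + y v) := by
  obtain ⟨hxi, cfx, hcfx⟩ := hx
  obtain ⟨hyi, cfy, hcfy⟩ := hy
  constructor
  · intro v
    obtain ⟨mx, hmx⟩ := hxi v
    obtain ⟨my, hmy⟩ := hyi v
    exact ⟨mx + my, by show x v + y v = _; rw [hmx, hmy]; push_cast; ring⟩
  · refine ⟨fun u => cfx u + cfy u, ?_⟩
    funext v
    rw [hcfx, hcfy]
    rw [← Finset.sum_add_distrib]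
    refine Finset.sum_congr rfl fun u _ => by push_cast; ring

theorem VZmem_zero (Estar : V → V → ℚ) : VZmem I Estar (fun _ => 0) := by
  refine ⟨fun v => ⟨0, by norm_num⟩, fun _ => 0, ?_⟩
  funext v
  simp

theorem VZmem_intsmul (Estar : V → V → ℚ) (c : ℤ) (x : V → ℚ)
    (hx : VZmem I Estar x) : VZmem I Estar (fun v => (c : ℚ) * x v) := by
  obtain ⟨hxi, cfx, hcfx⟩ := hx
  constructor
  · intro v
    obtain ⟨mx, hmx⟩ := hxi v
    exact ⟨c * mx, by show (c : ℚ) * x v = _; rw [hmx]; push_cast; ring⟩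
  · refine ⟨fun u => c * cfx u, ?_⟩
    funext v
    rw [hcfx]
    rw [Finset.mul_sum]
    refine Finset.sum_congr rfl fun u _ => by push_cast; ring

theorem VZmem_sum {ι : Type*} [DecidableEq ι] (Estar : V → V → ℚ) (F : Finset ι)
    (f : ι → V → ℚ) (hf : ∀ i ∈ F, VZmem I Estar (f i)) :
    VZmem I Estar (fun v => ∑ i ∈ F, f i v) := by
  induction F using Finset.induction with
  | empty => simpa using VZmem_zero I Estar
  | @insert a F' hnotmem ih =>
    have h1 : VZmem I Estar (f a) := hf a (Finset.mem_insert_self a F')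
    have h2 : VZmem I Estar (fun v => ∑ i ∈ F', f i v) :=
      ih (fun i hi => hf i (Finset.mem_insert_of_mem hi))
    have h3 := VZmem_add I Estar _ _ h1 h2
    have : (fun v => ∑ i ∈ insert a F', f i v)
        = fun v => f a v + ∑ i ∈ F', f i v := by
      funext v
      rw [Finset.sum_insert hnotmem]
    rw [this]
    exact h3

theorem leg_main
    (hsym : I.IsSymm)
    (hdiag : ∀ v : V, I v v < 0)
    (hnegdef : ∀ x : V → ℚ, x ≠ 0 → ∑ v, ∑ w, x v * (I v w : ℚ) * x w < 0)
    (Estar : V → V → ℚ)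
    (hEstar : ∀ v w, ∑ u, (I w u : ℚ) * Estar v u = if v = w then -1 else 0)
    (nd : V → V) (s : V → ℕ) (p : V → ℕ → V)
    (α : V → ℚ) (D : V → V → ℚ)
    (e : V) (he : degG I e = 1)
    (hlege : 1 ≤ s e ∧ p e 0 = nd e ∧ p e (s e) = e ∧ 3 ≤ degG I (nd e) ∧
      (∀ j, 1 ≤ j → j < s e → degG I (p e j) = 2) ∧
      (∀ j < s e, I (p e j) (p e (j + 1)) = 1) ∧
      Function.Injective (fun j : Fin (s e + 1) => p e j))
    (hαe : α e = |Matrix.det (Matrix.of fun i j : Fin (s e) =>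
        ((I (p e (i.1 + 1)) (p e (j.1 + 1)) : ℤ) : ℚ))|)
    (hDe : D e = fun v => α e * Estar e v - Estar (nd e) v) :
    (∃ A : ℤ, (A : ℚ) = α e ∧ 0 < A) ∧
    (∀ v, ∃ m : ℤ, D e v = (m : ℚ)) ∧
    (∀ v, degG I v ≠ 2 → v ≠ e → D e v = 0) ∧
    (∀ v, pairQ I (D e) v
        = (if v = nd e then 1 else 0) - α e * (if v = e then 1 else 0)) ∧
    (∀ x : V → ℚ, x (nd e) = 0 →
      (∀ j, 1 ≤ j → j < s e → pairQ I x (p e j) = 0) →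
      pairQ I x e = -(x (p e 1)) * α e) := by
  obtain ⟨hs1, hp0, hps, hnd3, hint, hedge, hinj⟩ := hlege
  -- injectivity on ℕ indices
  have Pinj : ∀ i j, i ≤ s e → j ≤ s e → p e i = p e j → i = j := by
    intro i j hi hj hij
    have h2 : (⟨i, by omega⟩ : Fin (s e + 1)) = ⟨j, by omega⟩ := hinj hij
    exact congrArg Fin.val h2
  have hedge' : ∀ j, j < s e → I (p e (j+1)) (p e j) = 1 := by
    intro j hj
    rw [hsym.apply]
    exact hedge j hj
  have hene : e ≠ nd e := by
    intro h
    rw [← h] at hnd3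
    omega
  -- support of the rows of the leg vertices
  have hsupp_int : ∀ j, 1 ≤ j → j < s e →
      ∀ u, u ≠ p e (j-1) → u ≠ p e j → u ≠ p e (j+1) → I (p e j) u = 0 := by
    intro j h1 h2 u hu1 hu2 hu3
    by_contra hne0
    have hIa : I (p e j) (p e (j-1)) ≠ 0 := by
      have h := hedge' (j-1) (by omega)
      rw [Nat.sub_add_cancel h1] at h
      rw [h]
      norm_num
    have hIb : I (p e j) (p e (j+1)) ≠ 0 := by
      rw [hedge j h2]
      norm_num
    have hd1 : p e (j-1) ≠ p e (j+1) := fun h =>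
      absurd (Pinj _ _ (by omega) (by omega) h) (by omega)
    have hd2 : p e (j-1) ≠ p e j := fun h =>
      absurd (Pinj _ _ (by omega) (by omega) h) (by omega)
    have hd3 : p e (j+1) ≠ p e j := fun h =>
      absurd (Pinj _ _ (by omega) (by omega) h) (by omega)
    rcases neigh2 I (hint j h1 h2) hd1 hd2 hd3 hIa hIb u hu2 hne0 with h | h
    · exact hu1 h
    · exact hu3 h
  have hsupp_end : ∀ u, u ≠ p e (s e - 1) → u ≠ p e (s e) → I (p e (s e)) u = 0 := by
    intro u hu1 hu2
    by_contra hne0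
    have hIa : I (p e (s e)) (p e (s e - 1)) ≠ 0 := by
      have h := hedge' (s e - 1) (by omega)
      rw [Nat.sub_add_cancel hs1] at h
      rw [h]
      norm_num
    have hd : p e (s e - 1) ≠ p e (s e) := fun h =>
      absurd (Pinj _ _ (by omega) (by omega) h) (by omega)
    have he' : degG I (p e (s e)) = 1 := by rw [hps]; exact he
    exact hu1 (neigh1 I he' hd hIa u hu2 hne0)
  have hIP0 : ∀ v, (∀ j, j ≤ s e → v ≠ p e j) → ∀ j, 1 ≤ j → j ≤ s e → I (p e j) v = 0 := by
    intro v hv j h1 h2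
    rcases Nat.lt_or_ge j (s e) with h | h
    · exact hsupp_int j h1 h v (hv (j-1) (by omega)) (hv j h2) (hv (j+1) (by omega))
    · have : j = s e := by omega
      subst this
      exact hsupp_end v (hv (s e - 1) (by omega)) (hv (s e) le_rfl)
  have hfar : ∀ i j, i + 1 < j → j ≤ s e → I (p e j) (p e i) = 0 := by
    intro i j hij hj
    rcases Nat.lt_or_ge j (s e) with h | h
    · refine hsupp_int j (by omega) h _ ?_ ?_ ?_ <;>
        (intro hh; have := Pinj _ _ (by omega) (by omega) hh; omega)
    · have : j = s e := by omega
      subst this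
      refine hsupp_end _ ?_ ?_ <;>
        (intro hh; have := Pinj _ _ (by omega) (by omega) hh; omega)
  have hfar' : ∀ i j, i + 1 < j → j ≤ s e → I (p e i) (p e j) = 0 := by
    intro i j hij hj
    rw [hsym.apply]
    exact hfar i j hij hj
  -- the continuant sequence
  set z : ℕ → ℚ := fun n => ((legz (fun j => -(I (p e j) (p e j))) n : ℤ) : ℚ) with hzdef
  have hz0 : z 0 = 0 := by simp [hzdef, legz]
  have hz1 : z 1 = 1 := by simp [hzdef, legz]
  have hzrec : ∀ m, z (m+2) = -((I (p e (m+1)) (p e (m+1)) : ℤ) : ℚ) * z (m+1) - z m := by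
    intro m
    simp only [hzdef, legz]
    push_cast
    ring
  -- the candidate leg cycle, truncated at level k
  set W : ℕ → V → ℚ :=
    fun k v => ∑ j ∈ Finset.Icc 1 k, if p e j = v then z j else 0 with hWdef
  have hWval : ∀ k i, k ≤ s e → 1 ≤ i → i ≤ k → W k (p e i) = z i := by
    intro k i hk h1 h2
    show (∑ j ∈ Finset.Icc 1 k, if p e j = p e i then z j else 0) = z i
    have hmem : i ∈ Finset.Icc 1 k := by simp only [Finset.mem_Icc]; omega
    have hO : ∀ j ∈ Finset.Icc 1 k, j ≠ i → (if p e j = p e i then z j else 0) = 0 := by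
      intro j hj hji
      rw [Finset.mem_Icc] at hj
      exact if_neg (fun h => hji (Pinj j i (by omega) (by omega) h))
    rw [Finset.sum_eq_single_of_mem i hmem hO, if_pos rfl]
  have hWval1 : ∀ k i, k ≤ s e → 1 ≤ i → i ≤ k → W k (p e i) = z i := hWval
  have hWnd : ∀ k, k ≤ s e → W k (p e 0) = 0 := by
    intro k hk
    show (∑ j ∈ Finset.Icc 1 k, if p e j = p e 0 then z j else 0) = 0
    refine Finset.sum_eq_zero ?_
    intro j hj
    rw [Finset.mem_Icc] at hj
    exact if_neg (fun h => by have := Pinj j 0 (by omega) (by omega) h; omega)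
  have hWoff : ∀ k v, k ≤ s e → (∀ j, j ≤ s e → v ≠ p e j) → W k v = 0 := by
    intro k v hk hv
    show (∑ j ∈ Finset.Icc 1 k, if p e j = v then z j else 0) = 0
    refine Finset.sum_eq_zero ?_
    intro j hj
    rw [Finset.mem_Icc] at hj
    exact if_neg (fun h => hv j (by omega) h.symm)
  have hWpair : ∀ k v, pairQ I (W k) v = ∑ j ∈ Finset.Icc 1 k, (I v (p e j) : ℚ) * z j := by
    intro k v
    exact pairQ_sum_ite I (Finset.Icc 1 k) (p e) z v
  -- pairing evaluations
  have hpair0 : ∀ k, 1 ≤ k → k ≤ s e → pairQ I (W k) (p e 0) = 1 := by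
    intro k h1 hk
    rw [hWpair]
    rw [Finset.sum_eq_single_of_mem 1 (by simp only [Finset.mem_Icc]; omega) ?_]
    · rw [hedge 0 (by omega), hz1]
      norm_num
    · intro j hj hj1
      rw [Finset.mem_Icc] at hj
      rw [hfar' 0 j (by omega) (by omega)]
      norm_num
  have hpairi : ∀ k i, 1 ≤ i → i < k → k ≤ s e → pairQ I (W k) (p e i) = 0 := by
    intro k i h1 h2 hk
    rw [hWpair]
    obtain ⟨m, rfl⟩ : ∃ m, i = m + 1 := ⟨i - 1, by omega⟩
    have hfar3 : ∀ j, 1 ≤ j → j ≤ k → j ≠ (m+1) - 1 → j ≠ (m+1) → j ≠ (m+1) + 1 →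
        (I (p e (m+1)) (p e j) : ℚ) * z j = 0 := by
      intro j hj1 hj2 hd1 hd2 hd3
      rcases Nat.lt_or_ge j (m+1) with h | h
      · rw [hfar j (m+1) (by omega) (by omega)]
        norm_num
      · rw [hfar' (m+1) j (by omega) (by omega)]
        norm_num
    rw [sum_Icc_three (f := fun j => (I (p e (m+1)) (p e j) : ℚ) * z j)
      (by omega : 1 ≤ m + 1) (by omega : (m+1) + 1 ≤ k)
      (by show ((I (p e (m+1)) (p e 0) : ℤ) : ℚ) * z 0 = 0; rw [hz0, mul_zero]) hfar3]
    simp only [Nat.add_sub_cancel]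
    rw [hedge' m (by omega), hedge (m+1) (by omega), hzrec m]
    push_cast
    ring
  have hpairk : ∀ k, 1 ≤ k → k ≤ s e → pairQ I (W k) (p e k) = -z (k+1) := by
    intro k h1 hk
    rw [hWpair]
    obtain ⟨m, rfl⟩ : ∃ m, k = m + 1 := ⟨k - 1, by omega⟩
    have hfar2 : ∀ j, 1 ≤ j → j ≤ m + 1 → j ≠ m → j ≠ m + 1 →
        (I (p e (m+1)) (p e j) : ℚ) * z j = 0 := by
      intro j hj1 hj2 hd1 hd2
      rw [hfar j (m+1) (by omega) (by omega)]
      norm_num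
    rw [sum_Icc_two (f := fun j => (I (p e (m+1)) (p e j) : ℚ) * z j)
      (by omega : m + 1 ≤ m + 1)
      (by show ((I (p e (m+1)) (p e 0) : ℤ) : ℚ) * z 0 = 0; rw [hz0, mul_zero]) hfar2]
    rw [hzrec m]
    rcases Nat.eq_zero_or_pos m with hm | hm
    · subst hm
      rw [hz0, hz1]
      push_cast
      ring
    · rw [hedge' m (by omega)]
      push_cast
      ring
  have hpairnext : ∀ k, 1 ≤ k → k < s e → pairQ I (W k) (p e (k+1)) = z k := by
    intro k h1 hk
    rw [hWpair]
    rw [Finset.sum_eq_single_of_mem k (by simp only [Finset.mem_Icc]; omega) ?_]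
    · rw [hedge' k (by omega)]
      norm_num
    · intro j hj hjk
      rw [Finset.mem_Icc] at hj
      rw [hfar j (k+1) (by omega) (by omega)]
      norm_num
  have hpairoff : ∀ k v, 1 ≤ k → k ≤ s e → (∀ j, j ≤ s e → v ≠ p e j) →
      pairQ I (W k) v = 0 := by
    intro k v h1 hk hv
    rw [hWpair]
    refine Finset.sum_eq_zero ?_
    intro j hj
    rw [Finset.mem_Icc] at hj
    rw [hsym.apply, hIP0 v hv j (by omega) (by omega)]
    norm_num
  -- positivity of the continuants
  have hQW : ∀ k, 1 ≤ k → k ≤ s e → 0 < z k * z (k+1) := by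
    intro k h1 hk
    have hWne : W k ≠ 0 := by
      intro h0
      have h1' := congrFun h0 (p e 1)
      rw [hWval k 1 hk le_rfl h1, hz1] at h1'
      norm_num at h1'
    have hQ := hnegdef (W k) hWne
    rw [Qform] at hQ
    have hform : ∑ v, W k v * pairQ I (W k) v
        = ∑ j ∈ Finset.Icc 1 k, z j * pairQ I (W k) (p e j) := by
      show ∑ v, (∑ j ∈ Finset.Icc 1 k, if p e j = v then z j else 0) * pairQ I (W k) v = _
      exact sum_suppSum_mul (Finset.Icc 1 k) (p e) z (pairQ I (W k))
    rw [hform] at hQ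
    have hsingle : ∑ j ∈ Finset.Icc 1 k, z j * pairQ I (W k) (p e j)
        = z k * pairQ I (W k) (p e k) := by
      refine Finset.sum_eq_single_of_mem k (by simp only [Finset.mem_Icc]; omega) ?_
      intro j hj hjk
      rw [Finset.mem_Icc] at hj
      rw [hpairi k j hj.1 (by omega) hk, mul_zero]
    rw [hsingle, hpairk k h1 hk] at hQ
    nlinarith
  have hzpos : ∀ k, 1 ≤ k → k ≤ s e + 1 → 0 < z k := by
    intro k
    induction k with
    | zero => omega
    | succ n ih =>
      intro _ hn
      rcases Nat.eq_zero_or_pos n with h0 | h0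
      · subst h0
        rw [hz1]
        norm_num
      · have hzn : 0 < z n := ih (by omega) (by omega)
        have := hQW n (by omega) (by omega)
        nlinarith
  -- the leading principal minors
  set A : (k : ℕ) → Matrix (Fin k) (Fin k) ℚ :=
    fun k => Matrix.of fun i j : Fin k => ((I (p e (i.1 + 1)) (p e (j.1 + 1)) : ℤ) : ℚ)
    with hAdef
  have hAE : ∀ k (i j : Fin k), A k i j = ((I (p e (i.1 + 1)) (p e (j.1 + 1)) : ℤ) : ℚ) :=
    fun k i j => rfl
  have hdet : ∀ k, k ≤ s e → (A k).det = (-1)^k * z (k+1) := by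
    refine nat_two_step ?_ ?_ ?_
    · intro _
      rw [Matrix.det_fin_zero, hz1]
      norm_num
    · intro h1
      rw [Matrix.det_fin_one, hAE, hzrec 0, hz0, hz1]
      norm_num
    · intro m ihm ihm1 hk
      have hm1 : m + 1 ≤ s e := by omega
      have hm : m ≤ s e := by omega
      -- the two surviving column indices in the last row
      have hexp := Matrix.det_succ_row (A (m+2)) (Fin.last (m+1))
      have hzero : ∀ j : Fin (m+2), j ≠ (⟨m, by omega⟩ : Fin (m+2)) → j ≠ Fin.last (m+1) →
          (-1 : ℚ)^(((Fin.last (m+1)) : ℕ) + (j : ℕ)) * A (m+2) (Fin.last (m+1)) j *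
            ((A (m+2)).submatrix (Fin.last (m+1)).succAbove j.succAbove).det = 0 := by
        intro j hj1 hj2
        have hjlt := j.isLt
        have h1 : (j : ℕ) ≠ m := fun h => hj1 (Fin.ext h)
        have h2 : (j : ℕ) ≠ m + 1 := fun h => hj2 (Fin.ext h)
        have hA0 : A (m+2) (Fin.last (m+1)) j = 0 := by
          rw [hAE]
          simp only [Fin.val_last]
          rw [hfar ((j : ℕ) + 1) (m+2) (by omega) hk]
          norm_num
        rw [hA0, mul_zero, zero_mul]
      rw [hexp, sum_eq_two (a := (⟨m, by omega⟩ : Fin (m+2))) (b := Fin.last (m+1))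
        (by intro h; have := congrArg Fin.val h; simp only [Fin.val_last] at this; omega)
        hzero]
      -- the diagonal term
      have hsubb : (A (m+2)).submatrix (Fin.last (m+1)).succAbove (Fin.last (m+1)).succAbove
          = A (m+1) := by
        ext i j
        rw [Matrix.submatrix_apply, Fin.succAbove_last, hAE, hAE]
        simp only [Fin.coe_castSucc]
      have hvalb : A (m+2) (Fin.last (m+1)) (Fin.last (m+1))
          = ((I (p e (m+2)) (p e (m+2)) : ℤ) : ℚ) := by
        rw [hAE]
        simp only [Fin.val_last]
      have hsignb : (-1 : ℚ)^(((Fin.last (m+1)) : ℕ) + ((Fin.last (m+1)) : ℕ)) = 1 := by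
        simp only [Fin.val_last]
        exact Even.neg_one_pow ⟨m+1, by ring⟩
      -- the off-diagonal term
      have hvala : A (m+2) (Fin.last (m+1)) (⟨m, by omega⟩ : Fin (m+2)) = 1 := by
        rw [hAE]
        simp only [Fin.val_last]
        rw [hedge' (m+1) (by omega)]
        norm_num
      have hsigna : (-1 : ℚ)^(((Fin.last (m+1)) : ℕ) + ((⟨m, by omega⟩ : Fin (m+2)) : ℕ))
          = -1 := by
        simp only [Fin.val_last]
        exact Odd.neg_one_pow ⟨m, by ring⟩
      -- the mixed minor
      have hdetB : ((A (m+2)).submatrix (Fin.last (m+1)).succAbove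
          ((⟨m, by omega⟩ : Fin (m+2)).succAbove)).det = (A m).det := by
        set B := (A (m+2)).submatrix (Fin.last (m+1)).succAbove
            ((⟨m, by omega⟩ : Fin (m+2)).succAbove) with hBdef
        have hBE : ∀ (i j : Fin (m+1)),
            B i j = A (m+2) (Fin.castSucc i) ((⟨m, by omega⟩ : Fin (m+2)).succAbove j) := by
          intro i j
          rw [hBdef, Matrix.submatrix_apply, Fin.succAbove_last]
        have hcol_lt : ∀ j : Fin (m+1), (j : ℕ) < m →
            (⟨m, by omega⟩ : Fin (m+2)).succAbove j = Fin.castSucc j := by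
          intro j hj
          refine Fin.succAbove_of_castSucc_lt _ _ ?_
          rw [Fin.lt_def]
          simpa using hj
        have hcol_last : (⟨m, by omega⟩ : Fin (m+2)).succAbove (Fin.last m)
            = Fin.last (m+1) := by
          rw [Fin.succAbove_of_le_castSucc _ _ (by rw [Fin.le_def]; simp), Fin.succ_last]
        rcases Nat.eq_zero_or_pos m with hm0 | hm0
        · subst hm0
          rw [Matrix.det_fin_one, Matrix.det_fin_zero]
          have h00 : (0 : Fin 1) = Fin.last 0 := rfl
          rw [hBE, h00, hcol_last, hAE]
          simp only [Fin.coe_castSucc, Fin.val_last]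
          rw [hedge 1 (by omega)]
          norm_num
        · obtain ⟨n, rfl⟩ : ∃ n, m = n + 1 := ⟨m - 1, by omega⟩
          have hexpB := Matrix.det_succ_row B (Fin.last (n+1))
          have hzeroB : ∀ j : Fin (n+2), j ≠ (⟨n, by omega⟩ : Fin (n+2)) →
              j ≠ Fin.last (n+1) →
              (-1 : ℚ)^(((Fin.last (n+1)) : ℕ) + (j : ℕ)) * B (Fin.last (n+1)) j *
                (B.submatrix (Fin.last (n+1)).succAbove j.succAbove).det = 0 := by
            intro j hj1 hj2
            have hjlt := j.isLt
            have h1 : (j : ℕ) ≠ n := fun h => hj1 (Fin.ext h)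
            have h2 : (j : ℕ) ≠ n + 1 := fun h => hj2 (Fin.ext h)
            have hB0 : B (Fin.last (n+1)) j = 0 := by
              rw [hBE, hcol_lt j (by omega), hAE]
              simp only [Fin.coe_castSucc, Fin.val_last]
              rw [hfar ((j : ℕ) + 1) (n+2) (by omega) (by omega)]
              norm_num
            rw [hB0, mul_zero, zero_mul]
          rw [hexpB, sum_eq_two (a := (⟨n, by omega⟩ : Fin (n+2))) (b := Fin.last (n+1))
            (by intro h; have := congrArg Fin.val h; simp only [Fin.val_last] at this; omega)
            hzeroB]
          -- diagonal term of B
          have hvalBb : B (Fin.last (n+1)) (Fin.last (n+1)) = 1 := by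
            rw [hBE, hcol_last, hAE]
            simp only [Fin.coe_castSucc, Fin.val_last]
            rw [hedge (n+2) (by omega)]
            norm_num
          have hsignBb : (-1 : ℚ)^(((Fin.last (n+1)) : ℕ) + ((Fin.last (n+1)) : ℕ)) = 1 := by
            simp only [Fin.val_last]
            exact Even.neg_one_pow ⟨n+1, by ring⟩
          have hsubBb : B.submatrix (Fin.last (n+1)).succAbove (Fin.last (n+1)).succAbove
              = A (n+1) := by
            ext i j
            rw [Matrix.submatrix_apply, Fin.succAbove_last, hBE,
              hcol_lt (Fin.castSucc j) (by simpa using j.isLt), hAE, hAE]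
            simp only [Fin.coe_castSucc]
          -- off-diagonal term of B
          have hvalBa : B (Fin.last (n+1)) (⟨n, by omega⟩ : Fin (n+2)) = 1 := by
            rw [hBE, hcol_lt _ (by simp), hAE]
            simp only [Fin.coe_castSucc, Fin.val_last]
            rw [hedge' (n+1) (by omega)]
            norm_num
          have hsignBa : (-1 : ℚ)^(((Fin.last (n+1)) : ℕ) + ((⟨n, by omega⟩ : Fin (n+2)) : ℕ))
              = -1 := by
            simp only [Fin.val_last]
            exact Odd.neg_one_pow ⟨n, by ring⟩
          have hdetC : (B.submatrix (Fin.last (n+1)).succAbove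
              ((⟨n, by omega⟩ : Fin (n+2)).succAbove)).det = 0 := by
            refine Matrix.det_eq_zero_of_column_eq_zero (Fin.last n) ?_
            intro i
            rw [Matrix.submatrix_apply, Fin.succAbove_last]
            have hcolC : (⟨n, by omega⟩ : Fin (n+2)).succAbove (Fin.last n)
                = Fin.last (n+1) := by
              rw [Fin.succAbove_of_le_castSucc _ _ (by rw [Fin.le_def]; simp), Fin.succ_last]
            rw [hcolC, hBE, hcol_last, hAE]
            simp only [Fin.coe_castSucc, Fin.val_last]
            rw [hfar' ((i : ℕ) + 1) (n+3) (by have := i.isLt; omega) (by omega)]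
            norm_num
          rw [hvalBb, hsignBb, hsubBb, hvalBa, hsignBa, hdetC]
          ring
      rw [hsubb, hvalb, hsignb, hvala, hsigna, hdetB, ihm1 hm1, ihm hm, hzrec (m+1)]
      rw [pow_succ, pow_succ]
      push_cast
      ring
  have hαz : α e = z (s e + 1) := by
    have hobv : (Matrix.of fun i j : Fin (s e) => ((I (p e (i.1 + 1)) (p e (j.1 + 1)) : ℤ) : ℚ))
        = A (s e) := rfl
    rw [hαe, hobv, hdet (s e) le_rfl, abs_mul, abs_pow, abs_neg, abs_one, one_pow, one_mul]
    exact abs_of_pos (hzpos (s e + 1) (by omega) (by omega))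
  have hαpos : 0 < α e := by
    rw [hαz]
    exact hzpos (s e + 1) (by omega) (by omega)
  -- the pairing of D e, computed from the dual basis
  have hpairD0 : ∀ v, pairQ I (D e) v
      = α e * (if e = v then -1 else 0) - (if nd e = v then -1 else 0) := by
    intro v
    rw [hDe]
    show (∑ u, (I v u : ℚ) * (α e * Estar e u - Estar (nd e) u)) = _
    rw [← hEstar e v, ← hEstar (nd e) v, Finset.mul_sum, ← Finset.sum_sub_distrib]
    exact Finset.sum_congr rfl fun u _ => by ring
  have hene' : e ≠ p e 0 := by
    intro h
    have := Pinj (s e) 0 le_rfl (by omega) (hps.trans h)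
    omega
  -- identification of D e with the explicit leg cycle W (s e)
  have hDW : D e = W (s e) := by
    refine pairQ_eq_of I hnegdef _ _ ?_
    intro v
    rw [hpairD0 v]
    by_cases hv : ∃ j, j ≤ s e ∧ p e j = v
    · obtain ⟨j, hj, rfl⟩ := hv
      rcases Nat.eq_zero_or_pos j with h0 | h0
      · subst h0
        rw [hpair0 (s e) (by omega) le_rfl]
        rw [if_neg hene', if_pos hp0.symm]
        ring
      · rcases Nat.lt_or_ge j (s e) with hjs | hjs
        · rw [hpairi (s e) j h0 hjs le_rfl]
          rw [if_neg, if_neg]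
          · ring
          · intro h
            have := Pinj 0 j (by omega) (by omega) (hp0.trans h)
            omega
          · intro h
            have := Pinj (s e) j le_rfl (by omega) (hps.trans h)
            omega
        · have : j = s e := by omega
          subst this
          rw [hpairk (s e) (by omega) le_rfl]
          rw [if_pos hps.symm, if_neg, hαz]
          · ring
          · intro h
            have := Pinj 0 (s e) (by omega) le_rfl (hp0.trans h)
            omega
    · push_neg at hv
      have hv' : ∀ j, j ≤ s e → v ≠ p e j := fun j hj h => (hv j hj) h.symm
      rw [hpairoff (s e) v (by omega) le_rfl hv']
      rw [if_neg, if_neg]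
      · ring
      · exact fun h => (hv' 0 (by omega)) (hp0.trans h).symm
      · exact fun h => (hv' (s e) le_rfl) (hps.trans h).symm
  -- conclusion (1)
  refine ⟨⟨legz (fun j => -(I (p e j) (p e j))) (s e + 1), by rw [hαz], ?_⟩, ?_, ?_, ?_, ?_⟩
  · have h := hzpos (s e + 1) (by omega) (by omega)
    simp only [hzdef] at h
    exact_mod_cast h
  -- conclusion (2a): integrality
  · intro v
    rw [hDW]
    refine ⟨∑ j ∈ Finset.Icc 1 (s e),
      if p e j = v then legz (fun j => -(I (p e j) (p e j))) j else 0, ?_⟩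
    show (∑ j ∈ Finset.Icc 1 (s e), if p e j = v then z j else 0) = _
    rw [Int.cast_sum]
    refine Finset.sum_congr rfl fun j _ => ?_
    split <;> simp [hzdef]
  -- conclusion (2b): vanishing off the open leg
  · intro v hdeg hve
    rw [hDW]
    by_cases hv : ∃ j, j ≤ s e ∧ p e j = v
    · obtain ⟨j, hj, rfl⟩ := hv
      rcases Nat.eq_zero_or_pos j with h0 | h0
      · subst h0
        exact hWnd (s e) le_rfl
      · rcases Nat.lt_or_ge j (s e) with hjs | hjs
        · exact absurd (hint j h0 hjs) hdeg
        · have : j = s e := by omega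
          subst this
          exact absurd hps hve
    · push_neg at hv
      exact hWoff (s e) v le_rfl (fun j hj h => (hv j hj) h.symm)
  -- conclusion (2c): pairings of D e
  · intro v
    rw [hpairD0 v]
    rcases eq_or_ne v e with h1 | h1 <;> rcases eq_or_ne v (nd e) with h2 | h2
    · subst h1
      rw [if_pos rfl, if_pos h2.symm, if_pos h2, if_pos rfl]
      ring
    · subst h1
      rw [if_pos rfl, if_neg (fun h => h2 h.symm), if_neg h2, if_pos rfl]
      ring
    · subst h2
      rw [if_neg (fun h => h1 h.symm), if_pos rfl, if_pos rfl, if_neg h1]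
      ring
    · rw [if_neg (fun h => h1 h.symm), if_neg (fun h => h2 h.symm), if_neg h2, if_neg h1]
      ring
  -- conclusion (3): the recursion along the leg
  · intro x hx0 hxp
    have hval3 : ∀ j, j ≤ s e → x (p e j) = x (p e 1) * z j := by
      refine nat_two_step (C := fun j => j ≤ s e → x (p e j) = x (p e 1) * z j) ?_ ?_ ?_
      · intro _
        rw [hp0, hx0, hz0, mul_zero]
      · intro _
        rw [hz1, mul_one]
      · intro m ihm ihm1 hk
        have hpz : pairQ I x (p e (m+1)) = 0 := hxp (m+1) (by omega) (by omega)
        have hsupp := hsupp_int (m+1) (by omega) (by omega)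
        simp only [Nat.add_sub_cancel] at hsupp
        have hthree : pairQ I x (p e (m+1))
            = (I (p e (m+1)) (p e m) : ℚ) * x (p e m)
              + (I (p e (m+1)) (p e (m+1)) : ℚ) * x (p e (m+1))
              + (I (p e (m+1)) (p e (m+2)) : ℚ) * x (p e (m+2)) := by
          unfold pairQ
          refine sum_eq_three ?_ ?_ ?_ ?_
          · intro h
            have := Pinj m (m+1) (by omega) (by omega) h
            omega
          · intro h
            have := Pinj m (m+2) (by omega) (by omega) h
            omega
          · intro h
            have := Pinj (m+1) (m+2) (by omega) (by omega) h
            omega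
          · intro u hu1 hu2 hu3
            rw [hsupp u hu1 hu2 hu3]
            norm_num
        rw [hthree, hedge' m (by omega), hedge (m+1) (by omega),
          ihm (by omega), ihm1 (by omega)] at hpz
        rw [hzrec m]
        push_cast at hpz ⊢
        linear_combination hpz
    obtain ⟨n, hn⟩ : ∃ n, s e = n + 1 := ⟨s e - 1, by omega⟩
    have hps' : p e (n+1) = e := by rw [← hn]; exact hps
    have hsupp_end' : ∀ u, u ≠ p e n → u ≠ p e (n+1) → I (p e (n+1)) u = 0 := by
      intro u h1 h2
      have := hsupp_end u ?_ ?_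
      · rw [hn] at this
        exact this
      · rw [hn]
        simpa using h1
      · rw [hn]
        exact h2
    have hfin : pairQ I x (p e (n+1))
        = (I (p e (n+1)) (p e n) : ℚ) * x (p e n)
          + (I (p e (n+1)) (p e (n+1)) : ℚ) * x (p e (n+1)) := by
      unfold pairQ
      refine sum_eq_two ?_ ?_
      · intro h
        have := Pinj n (n+1) (by omega) (by omega) h
        omega
      · intro u hu1 hu2
        rw [hsupp_end' u hu1 hu2]
        norm_num
    calc pairQ I x e = pairQ I x (p e (n+1)) := by rw [hps']
    _ = (I (p e (n+1)) (p e n) : ℚ) * x (p e n)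
          + (I (p e (n+1)) (p e (n+1)) : ℚ) * x (p e (n+1)) := hfin
    _ = -(x (p e 1)) * α e := by
        rw [hval3 n (by omega), hval3 (n+1) (by omega), hedge' n (by omega), hαz, hn,
          hzrec n]
        push_cast
        ring

end Stmt18Aux

/-- Splice-quotient type reduction.  Setup as for the leg cycles `D_e`: `G` a connected
negative definite tree with nodes `𝒩 = {δ ≥ 3}`, ends `ℰ = {δ = 1}`, dual cycles `E_v^*`,
leg data `nd, s, p`, leg determinants `α_e`, and `D_e = α_e E_e^* - E_{n_e}^*`.
Then (a) `ψ(l') = l' - ∑_{e ∈ ℰ} ⌊(-l',E_e)/α_e⌋ D_e` depends only on the restriction of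
`l' ∈ V_Z` to the nodes; and (b) for `l' ∈ V_Z`, the fiber `𝒮_Z(l'|_𝒩)` of the Lipman cone
consists exactly of the elements `ψ(l') + ∑_e k_e D_e` with `k_e ∈ ℕ` and
`∑_{e ∈ ℰ_n} k_e ≤ (-ψ(l'), E_n)` for every node `n`. -/
theorem stmt18 {V : Type*} [Fintype V] [DecidableEq V]
    (I : Matrix V V ℤ)
    (hsym : I.IsSymm)
    (hdiag : ∀ v : V, I v v < 0)
    (hoff : ∀ v w : V, v ≠ w → I v w = 0 ∨ I v w = 1)
    (hnegdef : ∀ x : V → ℚ, x ≠ 0 → ∑ v, ∑ w, x v * (I v w : ℚ) * x w < 0)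
    (hconn : ∀ v w : V, Relation.ReflTransGen (fun a b : V => a ≠ b ∧ I a b ≠ 0) v w)
    (htree : ∑ q ∈ (Finset.univ : Finset (V × V)).filter (fun q => q.1 ≠ q.2), I q.1 q.2
      = 2 * ((Fintype.card V : ℤ) - 1))
    (hnode : ∃ v, 3 ≤ degG I v)
    (Estar : V → V → ℚ)
    (hEstar : ∀ v w, ∑ u, (I w u : ℚ) * Estar v u = if v = w then -1 else 0)
    (nd : V → V) (s : V → ℕ) (p : V → ℕ → V)
    (hleg : ∀ e, degG I e = 1 →
      1 ≤ s e ∧ p e 0 = nd e ∧ p e (s e) = e ∧ 3 ≤ degG I (nd e) ∧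
      (∀ j, 1 ≤ j → j < s e → degG I (p e j) = 2) ∧
      (∀ j < s e, I (p e j) (p e (j + 1)) = 1) ∧
      Function.Injective (fun j : Fin (s e + 1) => p e j))
    (α : V → ℚ)
    (hα : ∀ e, degG I e = 1 →
      α e = |Matrix.det (Matrix.of fun i j : Fin (s e) =>
        ((I (p e (i.1 + 1)) (p e (j.1 + 1)) : ℤ) : ℚ))|)
    (D : V → V → ℚ)
    (hD : ∀ e, D e = fun v => α e * Estar e v - Estar (nd e) v)
    -- the operator `ψ`:
    (ψ : (V → ℚ) → (V → ℚ))
    (hψ : ∀ l' : V → ℚ, ψ l' = fun v => l' v -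
      ∑ e ∈ Finset.univ.filter (fun e => degG I e = 1),
        ((⌊(-(pairQ I l' e)) / α e⌋ : ℤ) : ℚ) * D e v) :
    -- (a) `ψ(l')` only depends on `l'|_𝒩`:
    (∀ l₁ l₂ : V → ℚ, VZmem I Estar l₁ → VZmem I Estar l₂ →
      (∀ n, 3 ≤ degG I n → l₁ n = l₂ n) → ψ l₁ = ψ l₂) ∧
    -- (b) description of the fiber `𝒮_Z(l)` of the Lipman cone:
    (∀ l' : V → ℚ, VZmem I Estar l' →
      ∀ y : V → ℚ,
        (VZmem I Estar y ∧ (∀ v, pairQ I y v ≤ 0) ∧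
          (∀ n, 3 ≤ degG I n → y n = l' n)) ↔
        (∃ k : V → ℕ,
          (y = fun v => ψ l' v +
            ∑ e ∈ Finset.univ.filter (fun e => degG I e = 1), (k e : ℚ) * D e v) ∧
          ∀ n, 3 ≤ degG I n →
            (∑ e ∈ Finset.univ.filter (fun e => degG I e = 1 ∧ nd e = n), (k e : ℚ))
              ≤ -(pairQ I (ψ l') n))) := by
  
  classical
  set EE := Finset.univ.filter (fun e : V => degG I e = 1) with hEE
  have hmemE : ∀ e, e ∈ EE ↔ degG I e = 1 := by
    intro e
    rw [hEE, Finset.mem_filter]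
    simp
  have hend := fun (e : V) (he : degG I e = 1) =>
    Stmt18Aux.leg_main I hsym hdiag hnegdef Estar hEstar nd s p α D e he (hleg e he)
      (hα e he) (hD e)
  have hαint : ∀ e, degG I e = 1 → ∃ A : ℤ, (A : ℚ) = α e ∧ 0 < A :=
    fun e he => (hend e he).1
  have hDint : ∀ e, degG I e = 1 → ∀ v, ∃ m : ℤ, D e v = (m : ℚ) :=
    fun e he => (hend e he).2.1
  have hDoff : ∀ e, degG I e = 1 → ∀ v, degG I v ≠ 2 → v ≠ e → D e v = 0 :=
    fun e he => (hend e he).2.2.1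
  have hDpair : ∀ e, degG I e = 1 → ∀ v, pairQ I (D e) v
      = (if v = nd e then 1 else 0) - α e * (if v = e then 1 else 0) :=
    fun e he => (hend e he).2.2.2.1
  have hleg3 : ∀ e, degG I e = 1 → ∀ x : V → ℚ, x (nd e) = 0 →
      (∀ j, 1 ≤ j → j < s e → pairQ I x (p e j) = 0) →
      pairQ I x e = -(x (p e 1)) * α e := fun e he => (hend e he).2.2.2.2
  have hα0 : ∀ e, degG I e = 1 → 0 < α e := by
    intro e he
    obtain ⟨A, hA, hA0⟩ := hαint e he
    rw [← hA]
    exact_mod_cast hA0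
  have hndn : ∀ e, degG I e = 1 → 3 ≤ degG I (nd e) := fun e he => (hleg e he).2.2.2.1
  have hDnode : ∀ e, degG I e = 1 → ∀ n, 3 ≤ degG I n → D e n = 0 := by
    intro e he n hn
    refine hDoff e he n (by omega) ?_
    intro h
    rw [h, he] at hn
    omega
  have hVZoff : ∀ x : V → ℚ, VZmem I Estar x → ∀ v,
      ¬(3 ≤ degG I v ∨ degG I v = 1) → pairQ I x v = 0 := by
    intro x hx v hv
    obtain ⟨_, cf, hcf⟩ := hx
    rw [hcf, Stmt18Aux.pairQ_dualcomb I Estar hEstar _ cf v, if_neg (by simpa using hv)]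
    norm_num
  have hVZleg : ∀ x : V → ℚ, VZmem I Estar x → ∀ e, degG I e = 1 →
      ∀ j, 1 ≤ j → j < s e → pairQ I x (p e j) = 0 := by
    intro x hx e he j h1 h2
    refine hVZoff x hx _ ?_
    have hd := (hleg e he).2.2.2.2.1 j h1 h2
    omega
  have hVZend : ∀ x : V → ℚ, VZmem I Estar x → (∀ n, 3 ≤ degG I n → x n = 0) →
      ∀ e, degG I e = 1 → pairQ I x e = -(x (p e 1)) * α e := by
    intro x hx hxn e he
    exact hleg3 e he x (hxn (nd e) (hndn e he)) (hVZleg x hx e he)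
  have hcomb : ∀ (c : V → ℚ) (w : V), pairQ I (fun v => ∑ e ∈ EE, c e * D e v) w
      = ∑ e ∈ EE, c e * ((if w = nd e then 1 else 0) - α e * (if w = e then 1 else 0)) := by
    intro c w
    have h1 : pairQ I (fun v => ∑ e ∈ EE, c e * D e v) w
        = ∑ e ∈ EE, pairQ I (fun v => c e * D e v) w :=
      Stmt18Aux.pairQ_finsum I EE (fun e v => c e * D e v) w
    rw [h1]
    refine Finset.sum_congr rfl fun e he => ?_
    have h2 : pairQ I (fun v => c e * D e v) w = c e * pairQ I (D e) w :=
      Stmt18Aux.pairQ_smul I (c e) (D e) w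
    rw [h2, hDpair e ((hmemE e).mp he)]
  have hcomb_end : ∀ (c : V → ℚ) (f : V), degG I f = 1 →
      (∑ e ∈ EE, c e * ((if f = nd e then 1 else 0) - α e * (if f = e then 1 else 0)))
        = -(c f * α f) := by
    intro c f hf
    rw [Finset.sum_eq_single_of_mem f ((hmemE f).mpr hf) ?_]
    · have h1 : ¬ f = nd f := by
        intro h
        have := hndn f hf
        rw [← h, hf] at this
        omega
      rw [if_neg h1, if_pos rfl]
      ring
    · intro e he hef
      have h1 : ¬ f = nd e := by
        intro h
        have := hndn e ((hmemE e).mp he)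
        rw [← h, hf] at this
        omega
      have h2 : ¬ f = e := fun h => hef h.symm
      rw [if_neg h1, if_neg h2]
      ring
  have hcomb_node : ∀ (c : V → ℚ) (n : V), 3 ≤ degG I n →
      (∑ e ∈ EE, c e * ((if n = nd e then 1 else 0) - α e * (if n = e then 1 else 0)))
        = ∑ e ∈ EE.filter (fun e => nd e = n), c e := by
    intro c n hn
    conv_rhs => rw [Finset.sum_filter]
    refine Finset.sum_congr rfl fun e he => ?_
    have hne : ¬ n = e := by
      intro h
      have h1 := (hmemE e).mp he
      rw [← h] at h1
      omega
    rw [if_neg hne]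
    by_cases h : nd e = n
    · rw [if_pos h.symm, if_pos h]
      ring
    · rw [if_neg (fun hh => h hh.symm), if_neg h]
      ring
  have hcomb_off : ∀ (c : V → ℚ) (w : V), ¬(3 ≤ degG I w ∨ degG I w = 1) →
      (∑ e ∈ EE, c e * ((if w = nd e then 1 else 0) - α e * (if w = e then 1 else 0)))
        = 0 := by
    intro c w hw
    push_neg at hw
    refine Finset.sum_eq_zero fun e he => ?_
    have h1 : ¬ w = nd e := by
      intro h
      have := hndn e ((hmemE e).mp he)
      rw [← h] at this
      omega
    have h2 : ¬ w = e := by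
      intro h
      have := (hmemE e).mp he
      rw [← h] at this
      omega
    rw [if_neg h1, if_neg h2]
    ring
  have hψval : ∀ l' : V → ℚ, ∀ v, ψ l' v
      = l' v - ∑ e ∈ EE, ((⌊(-(pairQ I l' e)) / α e⌋ : ℤ) : ℚ) * D e v := by
    intro l' v
    rw [hψ l']
  have hψpair : ∀ l' : V → ℚ, ∀ w, pairQ I (ψ l') w
      = pairQ I l' w - ∑ e ∈ EE, ((⌊(-(pairQ I l' e)) / α e⌋ : ℤ) : ℚ)
          * ((if w = nd e then 1 else 0) - α e * (if w = e then 1 else 0)) := by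
    intro l' w
    rw [hψ l']
    have h1 : pairQ I (fun v => l' v
          - ∑ e ∈ EE, ((⌊(-(pairQ I l' e)) / α e⌋ : ℤ) : ℚ) * D e v) w
        = pairQ I l' w - pairQ I
            (fun v => ∑ e ∈ EE, ((⌊(-(pairQ I l' e)) / α e⌋ : ℤ) : ℚ) * D e v) w :=
      Stmt18Aux.pairQ_sub I l' _ w
    rw [h1]
    have h2 : pairQ I (fun v => ∑ e ∈ EE, ((⌊(-(pairQ I l' e)) / α e⌋ : ℤ) : ℚ) * D e v) w
        = ∑ e ∈ EE, ((⌊(-(pairQ I l' e)) / α e⌋ : ℤ) : ℚ)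
            * ((if w = nd e then 1 else 0) - α e * (if w = e then 1 else 0)) :=
      hcomb (fun e => ((⌊(-(pairQ I l' e)) / α e⌋ : ℤ) : ℚ)) w
    rw [h2]
  have hψend : ∀ l' : V → ℚ, ∀ e, degG I e = 1 →
      pairQ I (ψ l') e = pairQ I l' e + ((⌊(-(pairQ I l' e)) / α e⌋ : ℤ) : ℚ) * α e := by
    intro l' e he
    rw [hψpair l' e]
    have h3 : (∑ f ∈ EE, ((⌊(-(pairQ I l' f)) / α f⌋ : ℤ) : ℚ)
          * ((if e = nd f then 1 else 0) - α f * (if e = f then 1 else 0)))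
        = -(((⌊(-(pairQ I l' e)) / α e⌋ : ℤ) : ℚ) * α e) :=
      hcomb_end (fun f => ((⌊(-(pairQ I l' f)) / α f⌋ : ℤ) : ℚ)) e he
    rw [h3]
    ring
  have hψbnd : ∀ l' : V → ℚ, ∀ e, degG I e = 1 →
      -α e < pairQ I (ψ l') e ∧ pairQ I (ψ l') e ≤ 0 := by
    intro l' e he
    rw [hψend l' e he]
    have hα := hα0 e he
    have h1 : pairQ I l' e = -(((-(pairQ I l' e)) / α e) * α e) := by
      field_simp
    have h2 : ((⌊(-(pairQ I l' e)) / α e⌋ : ℚ)) ≤ (-(pairQ I l' e)) / α e :=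
      Int.floor_le _
    have h3 : (-(pairQ I l' e)) / α e - 1 < ((⌊(-(pairQ I l' e)) / α e⌋ : ℚ)) :=
      Int.sub_one_lt_floor _
    constructor <;> nlinarith
  have hψnode : ∀ l' : V → ℚ, ∀ n, 3 ≤ degG I n → ψ l' n = l' n := by
    intro l' n hn
    rw [hψval l' n]
    rw [Finset.sum_eq_zero fun e he => by
      rw [hDnode e ((hmemE e).mp he) n hn, mul_zero]]
    ring
  have hVZD : ∀ e, degG I e = 1 → VZmem I Estar (D e) := by
    intro e he
    obtain ⟨A, hA, hApos⟩ := hαint e he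
    have hene : e ≠ nd e := by
      intro h
      have := hndn e he
      rw [← h, he] at this
      omega
    refine ⟨hDint e he, fun u => if u = e then A else if u = nd e then -1 else 0, ?_⟩
    funext v
    have hDev : D e v = α e * Estar e v - Estar (nd e) v := by rw [hD e]
    rw [hDev]
    symm
    show (∑ u ∈ Finset.univ.filter (fun u => 3 ≤ degG I u ∨ degG I u = 1),
        ((if u = e then A else if u = nd e then -1 else 0 : ℤ) : ℚ) * Estar u v)
      = α e * Estar e v - Estar (nd e) v
    have hsub : ({e, nd e} : Finset V)
        ⊆ Finset.univ.filter (fun u => 3 ≤ degG I u ∨ degG I u = 1) := by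
      intro u hu
      rcases Finset.mem_insert.mp hu with h | h
      · subst h
        simp [he]
      · rw [Finset.mem_singleton] at h
        subst h
        simp [hndn e he]
    rw [← Finset.sum_subset hsub ?_]
    · rw [Finset.sum_insert (by simpa using hene), Finset.sum_singleton]
      rw [if_pos rfl, if_neg (fun h => hene h.symm), if_pos rfl, hA]
      push_cast
      ring
    · intro u hu hu'
      simp only [Finset.mem_insert, Finset.mem_singleton] at hu'
      push_neg at hu'
      rw [if_neg hu'.1, if_neg hu'.2]
      norm_num
  have hVZψ : ∀ l', VZmem I Estar l' → VZmem I Estar (ψ l') := by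
    intro l' hl'
    have hsum : VZmem I Estar
        (fun v => ∑ e ∈ EE, ((⌊(-(pairQ I l' e)) / α e⌋ : ℤ) : ℚ) * D e v) := by
      refine Stmt18Aux.VZmem_sum I Estar EE _ ?_
      intro e he
      exact Stmt18Aux.VZmem_intsmul I Estar _ (D e) (hVZD e ((hmemE e).mp he))
    have h1 := Stmt18Aux.VZmem_sub I Estar l' _ hl' hsum
    rw [hψ l']
    exact h1
  have hker : ∀ x : V → ℚ, VZmem I Estar x → (∀ n, 3 ≤ degG I n → x n = 0) →
      x = fun v => ∑ e ∈ EE, x (p e 1) * D e v := by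
    intro x hx hxn
    refine Stmt18Aux.pairQ_eq_of_mixed I hnegdef x _ {n | 3 ≤ degG I n} ?_ ?_
    · intro n hn
      simp only [Set.mem_setOf_eq] at hn
      rw [hxn n hn]
      symm
      refine Finset.sum_eq_zero fun e he => ?_
      rw [hDnode e ((hmemE e).mp he) n hn, mul_zero]
    · intro v hv
      simp only [Set.mem_setOf_eq, not_le] at hv
      have hco : pairQ I (fun w => ∑ e ∈ EE, x (p e 1) * D e w) v
          = ∑ e ∈ EE, x (p e 1)
              * ((if v = nd e then 1 else 0) - α e * (if v = e then 1 else 0)) :=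
        hcomb (fun e => x (p e 1)) v
      rw [hco]
      by_cases hv1 : degG I v = 1
      · have h1 : (∑ e ∈ EE, x (p e 1)
              * ((if v = nd e then 1 else 0) - α e * (if v = e then 1 else 0)))
            = -(x (p v 1) * α v) := hcomb_end (fun e => x (p e 1)) v hv1
        rw [h1, hVZend x hx hxn v hv1]
        ring
      · have h1 : (∑ e ∈ EE, x (p e 1)
              * ((if v = nd e then 1 else 0) - α e * (if v = e then 1 else 0)))
            = 0 := hcomb_off (fun e => x (p e 1)) v (by omega)
        rw [h1, hVZoff x hx v (by omega)]
  constructor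
  -- part (a)
  · intro l₁ l₂ h1 h2 hagree
    have hx : VZmem I Estar (fun v => l₁ v - l₂ v) :=
      Stmt18Aux.VZmem_sub I Estar l₁ l₂ h1 h2
    have hxn : ∀ n, 3 ≤ degG I n → l₁ n - l₂ n = 0 := fun n hn => by
      rw [hagree n hn]; ring
    have hk := hker (fun v => l₁ v - l₂ v) hx hxn
    have hrel : ∀ e, degG I e = 1 →
        pairQ I l₁ e = pairQ I l₂ e - (l₁ (p e 1) - l₂ (p e 1)) * α e := by
      intro e he
      have hv : pairQ I (fun v => l₁ v - l₂ v) e = -(l₁ (p e 1) - l₂ (p e 1)) * α e :=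
        hVZend (fun v => l₁ v - l₂ v) hx hxn e he
      rw [Stmt18Aux.pairQ_sub I l₁ l₂ e] at hv
      linarith
    have hflr : ∀ e, degG I e = 1 →
        ((⌊(-(pairQ I l₁ e)) / α e⌋ : ℤ) : ℚ)
          = ((⌊(-(pairQ I l₂ e)) / α e⌋ : ℤ) : ℚ) + (l₁ (p e 1) - l₂ (p e 1)) := by
      intro e he
      obtain ⟨m, hm⟩ := hx.1 (p e 1)
      have hm' : l₁ (p e 1) - l₂ (p e 1) = (m : ℚ) := hm
      have hα := hα0 e he
      have harg : (-(pairQ I l₁ e)) / α e = (-(pairQ I l₂ e)) / α e + (m : ℚ) := by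
        rw [hrel e he, hm']
        field_simp
        ring
      rw [harg, Int.floor_add_intCast, hm']
      push_cast
      ring
    funext v
    rw [hψval l₁ v, hψval l₂ v]
    have hkv : l₁ v - l₂ v = ∑ e ∈ EE, (l₁ (p e 1) - l₂ (p e 1)) * D e v := congrFun hk v
    have hsplit : ∑ e ∈ EE, ((⌊(-(pairQ I l₁ e)) / α e⌋ : ℤ) : ℚ) * D e v
        = ∑ e ∈ EE, ((⌊(-(pairQ I l₂ e)) / α e⌋ : ℤ) : ℚ) * D e v
          + ∑ e ∈ EE, (l₁ (p e 1) - l₂ (p e 1)) * D e v := by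
      rw [← Finset.sum_add_distrib]
      refine Finset.sum_congr rfl fun e he => ?_
      rw [hflr e ((hmemE e).mp he)]
      ring
    rw [hsplit]
    linarith [hkv]
  -- part (b)
  · intro l' hl' y
    have hψVZ := hVZψ l' hl'
    have hfilter : ∀ n : V, (Finset.univ.filter (fun e => degG I e = 1 ∧ nd e = n))
        = EE.filter (fun e => nd e = n) := by
      intro n
      rw [hEE, Finset.filter_filter]
    constructor
    · rintro ⟨hyVZ, hyL, hyagree⟩
      have hxVZ : VZmem I Estar (fun v => y v - ψ l' v) :=
        Stmt18Aux.VZmem_sub I Estar y (ψ l') hyVZ hψVZ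
      have hxn : ∀ n, 3 ≤ degG I n → y n - ψ l' n = 0 := by
        intro n hn
        rw [hψnode l' n hn, hyagree n hn]
        ring
      have hk := hker _ hxVZ hxn
      have hcoef : ∀ e, degG I e = 1 →
          ∃ m : ℤ, y (p e 1) - ψ l' (p e 1) = (m : ℚ) ∧ 0 ≤ m := by
        intro e he
        obtain ⟨m, hm⟩ := hxVZ.1 (p e 1)
        have hm' : y (p e 1) - ψ l' (p e 1) = (m : ℚ) := hm
        refine ⟨m, hm', ?_⟩
        have hv : pairQ I (fun v => y v - ψ l' v) e = -(y (p e 1) - ψ l' (p e 1)) * α e :=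
          hVZend _ hxVZ hxn e he
        rw [Stmt18Aux.pairQ_sub I y (ψ l') e, hm'] at hv
        have hb := (hψbnd l' e he).1
        have hy0 := hyL e
        have hα := hα0 e he
        by_contra hneg
        push_neg at hneg
        have hm1 : (m : ℚ) ≤ -1 := by
          have : m ≤ -1 := by omega
          exact_mod_cast this
        nlinarith
      refine ⟨fun e => (⌊y (p e 1) - ψ l' (p e 1)⌋).toNat, ?_, ?_⟩
      · funext v
        have hkv : y v - ψ l' v = ∑ e ∈ EE, (y (p e 1) - ψ l' (p e 1)) * D e v :=
          congrFun hk v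
        have hsame : ∀ e ∈ EE,
            (((⌊y (p e 1) - ψ l' (p e 1)⌋).toNat : ℕ) : ℚ) * D e v
              = (y (p e 1) - ψ l' (p e 1)) * D e v := by
          intro e he
          obtain ⟨m, hm, hm0⟩ := hcoef e ((hmemE e).mp he)
          rw [hm, Int.floor_intCast]
          congr 1
          exact_mod_cast congrArg (Int.cast : ℤ → ℚ) (Int.toNat_of_nonneg hm0)
        rw [Finset.sum_congr rfl hsame]
        linarith [hkv]
      · intro n hn
        rw [hfilter n]
        have hpx : pairQ I (fun v => y v - ψ l' v) n
            = ∑ e ∈ EE.filter (fun e => nd e = n), (y (p e 1) - ψ l' (p e 1)) := by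
          rw [hk]
          have hco : pairQ I (fun w => ∑ e ∈ EE, (y (p e 1) - ψ l' (p e 1)) * D e w) n
              = ∑ e ∈ EE, (y (p e 1) - ψ l' (p e 1))
                  * ((if n = nd e then 1 else 0) - α e * (if n = e then 1 else 0)) :=
            hcomb (fun e => y (p e 1) - ψ l' (p e 1)) n
          rw [hco]
          exact hcomb_node (fun e => y (p e 1) - ψ l' (p e 1)) n hn
        rw [Stmt18Aux.pairQ_sub I y (ψ l') n] at hpx
        have hyn := hyL n
        have hsum_eq : ∑ e ∈ EE.filter (fun e => nd e = n),
            (((⌊y (p e 1) - ψ l' (p e 1)⌋).toNat : ℕ) : ℚ)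
            = ∑ e ∈ EE.filter (fun e => nd e = n), (y (p e 1) - ψ l' (p e 1)) := by
          refine Finset.sum_congr rfl fun e he => ?_
          have heE : e ∈ EE := Finset.mem_of_mem_filter e he
          obtain ⟨m, hm, hm0⟩ := hcoef e ((hmemE e).mp heE)
          rw [hm, Int.floor_intCast]
          exact_mod_cast congrArg (Int.cast : ℤ → ℚ) (Int.toNat_of_nonneg hm0)
        rw [hsum_eq]
        linarith
    · rintro ⟨k, hky, hkle⟩
      have hkD : VZmem I Estar (fun v => ∑ e ∈ EE, (k e : ℚ) * D e v) := by
        refine Stmt18Aux.VZmem_sum I Estar EE _ fun e he => ?_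
        have h1 := Stmt18Aux.VZmem_intsmul I Estar (k e : ℤ) (D e)
          (hVZD e ((hmemE e).mp he))
        have h2 : (fun v => ((k e : ℤ) : ℚ) * D e v) = fun v => (k e : ℚ) * D e v := by
          funext v
          push_cast
          ring
        rwa [h2] at h1
      have hyVZ : VZmem I Estar y := by
        rw [hky]
        exact Stmt18Aux.VZmem_add I Estar (ψ l') _ hψVZ hkD
      have hyp : ∀ v, pairQ I y v = pairQ I (ψ l') v
          + ∑ e ∈ EE, (k e : ℚ)
              * ((if v = nd e then 1 else 0) - α e * (if v = e then 1 else 0)) := by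
        intro v
        rw [hky]
        have hadd : pairQ I (fun w => ψ l' w + ∑ e ∈ EE, (k e : ℚ) * D e w) v
            = pairQ I (ψ l') v + pairQ I (fun w => ∑ e ∈ EE, (k e : ℚ) * D e w) v :=
          Stmt18Aux.pairQ_add I (ψ l') _ v
        rw [hadd]
        have hco : pairQ I (fun w => ∑ e ∈ EE, (k e : ℚ) * D e w) v
            = ∑ e ∈ EE, (k e : ℚ)
                * ((if v = nd e then 1 else 0) - α e * (if v = e then 1 else 0)) :=
          hcomb (fun e => (k e : ℚ)) v
        rw [hco]
      refine ⟨hyVZ, ?_, ?_⟩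
      · intro v
        rw [hyp v]
        by_cases hv3 : 3 ≤ degG I v
        · have h1 : (∑ e ∈ EE, (k e : ℚ)
              * ((if v = nd e then 1 else 0) - α e * (if v = e then 1 else 0)))
              = ∑ e ∈ EE.filter (fun e => nd e = v), (k e : ℚ) :=
            hcomb_node (fun e => (k e : ℚ)) v hv3
          rw [h1]
          have := hkle v hv3
          rw [hfilter v] at this
          linarith
        · by_cases hv1 : degG I v = 1
          · have h1 : (∑ e ∈ EE, (k e : ℚ)
                * ((if v = nd e then 1 else 0) - α e * (if v = e then 1 else 0)))
                = -((k v : ℚ) * α v) := hcomb_end (fun e => (k e : ℚ)) v hv1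
            rw [h1]
            have hb := (hψbnd l' v hv1).2
            have hα := hα0 v hv1
            have hk0 : (0 : ℚ) ≤ (k v : ℚ) := by positivity
            nlinarith
          · have h1 : (∑ e ∈ EE, (k e : ℚ)
                * ((if v = nd e then 1 else 0) - α e * (if v = e then 1 else 0)))
                = 0 := hcomb_off (fun e => (k e : ℚ)) v (by omega)
            rw [h1]
            have h2 : pairQ I (ψ l') v = 0 := by
              rw [hψpair l' v]
              have h3 : (∑ e ∈ EE, ((⌊(-(pairQ I l' e)) / α e⌋ : ℤ) : ℚ)
                  * ((if v = nd e then 1 else 0) - α e * (if v = e then 1 else 0)))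
                  = 0 :=
                hcomb_off (fun e => ((⌊(-(pairQ I l' e)) / α e⌋ : ℤ) : ℚ)) v (by omega)
              rw [h3, hVZoff l' hl' v (by omega)]
              ring
            rw [h2]
            norm_num
      · intro n hn
        have hkv : y n = ψ l' n + ∑ e ∈ EE, (k e : ℚ) * D e n := congrFun hky n
        rw [hkv, hψnode l' n hn]
        rw [Finset.sum_eq_zero fun e he => by
          rw [hDnode e ((hmemE e).mp he) n hn, mul_zero]]
        ring
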